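/- Let g ≥ 1 be an integer and ℓ ≥ 5 a prime. The group Rad(GSp_{2g}(F_ℓ)) of radial automorphisms of GSp_{2g}(F_ℓ) has order 2φ(ℓ−1), where φ is Euler's totient function; equivalently, the number of integers k with 0 ≤ k < ℓ−1 and gcd(2k+1, ℓ−1) = 1 equals 2φ(ℓ−1), and distinct such k give distinct automorphisms χ_k. -/
import Mathlib


open Matrix Polynomial

namespace Paper

variable (g : ℕ) (R : Type*) [CommRing R]

/-- The standard symplectic form matrix `J = [[0, I], [-I, 0]]`. -/
def sJ : Matrix (Fin g ⊕ Fin g) (Fin g ⊕ Fin g) R := Matrix.fromBlocks 0 1 (-1) 0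

variable {g R}

lemma symp_one :
    ((1 : GL (Fin g ⊕ Fin g) R) : Matrix (Fin g ⊕ Fin g) (Fin g ⊕ Fin g) R)ᵀ * sJ g R *
      ((1 : GL (Fin g ⊕ Fin g) R) : Matrix (Fin g ⊕ Fin g) (Fin g ⊕ Fin g) R)
      = ((1 : Rˣ) : R) • sJ g R := by
  simp

lemma symp_mul {a b : GL (Fin g ⊕ Fin g) R} {u v : Rˣ}
    (ha : (a : Matrix (Fin g ⊕ Fin g) (Fin g ⊕ Fin g) R)ᵀ * sJ g R * a = (u : R) • sJ g R)
    (hb : (b : Matrix (Fin g ⊕ Fin g) (Fin g ⊕ Fin g) R)ᵀ * sJ g R * b = (v : R) • sJ g R) :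
    ((a * b : GL (Fin g ⊕ Fin g) R) : Matrix (Fin g ⊕ Fin g) (Fin g ⊕ Fin g) R)ᵀ * sJ g R *
      ((a * b : GL (Fin g ⊕ Fin g) R) : Matrix (Fin g ⊕ Fin g) (Fin g ⊕ Fin g) R)
      = ((u * v : Rˣ) : R) • sJ g R := by
  have hab : ((a * b : GL (Fin g ⊕ Fin g) R) : Matrix (Fin g ⊕ Fin g) (Fin g ⊕ Fin g) R)
      = (a : Matrix (Fin g ⊕ Fin g) (Fin g ⊕ Fin g) R) * b := rfl
  calc ((a * b : GL (Fin g ⊕ Fin g) R) : Matrix (Fin g ⊕ Fin g) (Fin g ⊕ Fin g) R)ᵀ * sJ g R *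
        ((a * b : GL (Fin g ⊕ Fin g) R) : Matrix (Fin g ⊕ Fin g) (Fin g ⊕ Fin g) R)
      = (b : Matrix (Fin g ⊕ Fin g) (Fin g ⊕ Fin g) R)ᵀ *
          ((a : Matrix (Fin g ⊕ Fin g) (Fin g ⊕ Fin g) R)ᵀ * sJ g R * a) * b := by
        rw [hab, transpose_mul]; noncomm_ring
    _ = (b : Matrix (Fin g ⊕ Fin g) (Fin g ⊕ Fin g) R)ᵀ * ((u : R) • sJ g R) * b := by rw [ha]
    _ = (u : R) • ((b : Matrix (Fin g ⊕ Fin g) (Fin g ⊕ Fin g) R)ᵀ * sJ g R * b) := by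
        rw [Matrix.mul_smul, Matrix.smul_mul]
    _ = (u : R) • ((v : R) • sJ g R) := by rw [hb]
    _ = ((u * v : Rˣ) : R) • sJ g R := by rw [smul_smul, Units.val_mul]

lemma symp_inv {a : GL (Fin g ⊕ Fin g) R} {u : Rˣ}
    (ha : (a : Matrix (Fin g ⊕ Fin g) (Fin g ⊕ Fin g) R)ᵀ * sJ g R * a = (u : R) • sJ g R) :
    ((a⁻¹ : GL (Fin g ⊕ Fin g) R) : Matrix (Fin g ⊕ Fin g) (Fin g ⊕ Fin g) R)ᵀ * sJ g R *
      ((a⁻¹ : GL (Fin g ⊕ Fin g) R) : Matrix (Fin g ⊕ Fin g) (Fin g ⊕ Fin g) R)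
      = ((u⁻¹ : Rˣ) : R) • sJ g R := by
  have key : (u : R) • (((a⁻¹ : GL (Fin g ⊕ Fin g) R) : Matrix (Fin g ⊕ Fin g) (Fin g ⊕ Fin g) R)ᵀ *
      sJ g R * ((a⁻¹ : GL (Fin g ⊕ Fin g) R) : Matrix (Fin g ⊕ Fin g) (Fin g ⊕ Fin g) R)) = sJ g R := by
    calc (u : R) • (((a⁻¹ : GL (Fin g ⊕ Fin g) R) : Matrix (Fin g ⊕ Fin g) (Fin g ⊕ Fin g) R)ᵀ *
          sJ g R * ((a⁻¹ : GL (Fin g ⊕ Fin g) R) : Matrix (Fin g ⊕ Fin g) (Fin g ⊕ Fin g) R))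
        = ((a⁻¹ : GL (Fin g ⊕ Fin g) R) : Matrix (Fin g ⊕ Fin g) (Fin g ⊕ Fin g) R)ᵀ *
            ((u : R) • sJ g R) * ((a⁻¹ : GL (Fin g ⊕ Fin g) R) : Matrix (Fin g ⊕ Fin g) (Fin g ⊕ Fin g) R) := by
          rw [Matrix.mul_smul, Matrix.smul_mul]
      _ = ((a⁻¹ : GL (Fin g ⊕ Fin g) R) : Matrix (Fin g ⊕ Fin g) (Fin g ⊕ Fin g) R)ᵀ *
            ((a : Matrix (Fin g ⊕ Fin g) (Fin g ⊕ Fin g) R)ᵀ * sJ g R * a) *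
            ((a⁻¹ : GL (Fin g ⊕ Fin g) R) : Matrix (Fin g ⊕ Fin g) (Fin g ⊕ Fin g) R) := by rw [ha]
      _ = ((a : Matrix (Fin g ⊕ Fin g) (Fin g ⊕ Fin g) R) *
            ((a⁻¹ : GL (Fin g ⊕ Fin g) R) : Matrix (Fin g ⊕ Fin g) (Fin g ⊕ Fin g) R))ᵀ * sJ g R *
            ((a : Matrix (Fin g ⊕ Fin g) (Fin g ⊕ Fin g) R) *
            ((a⁻¹ : GL (Fin g ⊕ Fin g) R) : Matrix (Fin g ⊕ Fin g) (Fin g ⊕ Fin g) R)) := by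
          rw [transpose_mul]; noncomm_ring
      _ = sJ g R := by
          rw [← Units.val_mul, mul_inv_cancel]; simp
  calc ((a⁻¹ : GL (Fin g ⊕ Fin g) R) : Matrix (Fin g ⊕ Fin g) (Fin g ⊕ Fin g) R)ᵀ * sJ g R *
        ((a⁻¹ : GL (Fin g ⊕ Fin g) R) : Matrix (Fin g ⊕ Fin g) (Fin g ⊕ Fin g) R)
      = ((u⁻¹ : Rˣ) : R) • ((u : R) •
          (((a⁻¹ : GL (Fin g ⊕ Fin g) R) : Matrix (Fin g ⊕ Fin g) (Fin g ⊕ Fin g) R)ᵀ * sJ g R *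
          ((a⁻¹ : GL (Fin g ⊕ Fin g) R) : Matrix (Fin g ⊕ Fin g) (Fin g ⊕ Fin g) R))) := by
        rw [smul_smul, Units.inv_mul, one_smul]
    _ = ((u⁻¹ : Rˣ) : R) • sJ g R := by rw [key]

variable (g R)

/-- The general symplectic group `GSp_{2g}(R)` as a subgroup of `GL_{2g}(R)`. -/
def GSp : Subgroup (GL (Fin g ⊕ Fin g) R) where
  carrier := {a | ∃ u : Rˣ,
    (a : Matrix (Fin g ⊕ Fin g) (Fin g ⊕ Fin g) R)ᵀ * sJ g R * a = (u : R) • sJ g R}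
  one_mem' := ⟨1, symp_one⟩
  mul_mem' := fun ⟨u, hu⟩ ⟨v, hv⟩ => ⟨u * v, symp_mul hu hv⟩
  inv_mem' := fun ⟨u, hu⟩ => ⟨u⁻¹, symp_inv hu⟩

/-- The symplectic group `Sp_{2g}(R)`, the kernel of the multiplier. -/
def Sp : Subgroup (GL (Fin g ⊕ Fin g) R) where
  carrier := {a | (a : Matrix (Fin g ⊕ Fin g) (Fin g ⊕ Fin g) R)ᵀ * sJ g R * a = sJ g R}
  one_mem' := by simpa using (symp_one (g := g) (R := R))
  mul_mem' := by
    intro a b ha hb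
    have ha' : (a : Matrix (Fin g ⊕ Fin g) (Fin g ⊕ Fin g) R)ᵀ * sJ g R * a
        = ((1 : Rˣ) : R) • sJ g R := by simpa using ha
    have hb' : (b : Matrix (Fin g ⊕ Fin g) (Fin g ⊕ Fin g) R)ᵀ * sJ g R * b
        = ((1 : Rˣ) : R) • sJ g R := by simpa using hb
    simpa using symp_mul ha' hb'
  inv_mem' := by
    intro a ha
    have ha' : (a : Matrix (Fin g ⊕ Fin g) (Fin g ⊕ Fin g) R)ᵀ * sJ g R * a
        = ((1 : Rˣ) : R) • sJ g R := by simpa using ha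
    simpa using symp_inv ha'

/-- The fiber product `Δ_{2g}(R) = GSp ×_mult GSp`. -/
def Delta : Subgroup (GL (Fin g ⊕ Fin g) R × GL (Fin g ⊕ Fin g) R) where
  carrier := {p | ∃ u : Rˣ,
    (p.1 : Matrix (Fin g ⊕ Fin g) (Fin g ⊕ Fin g) R)ᵀ * sJ g R * p.1 = (u : R) • sJ g R ∧
    (p.2 : Matrix (Fin g ⊕ Fin g) (Fin g ⊕ Fin g) R)ᵀ * sJ g R * p.2 = (u : R) • sJ g R}
  one_mem' := ⟨1, symp_one, symp_one⟩
  mul_mem' := fun ⟨u, hu1, hu2⟩ ⟨v, hv1, hv2⟩ => ⟨u * v, symp_mul hu1 hv1, symp_mul hu2 hv2⟩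
  inv_mem' := fun ⟨u, hu1, hu2⟩ => ⟨u⁻¹, symp_inv hu1, symp_inv hu2⟩

/-- The `n`-fold fiber product `Δ_{2g,n}(R)`. -/
def DeltaN (n : ℕ) : Subgroup ((_ : Fin n) → GL (Fin g ⊕ Fin g) R) where
  carrier := {p | ∃ u : Rˣ, ∀ i,
    (p i : Matrix (Fin g ⊕ Fin g) (Fin g ⊕ Fin g) R)ᵀ * sJ g R * p i = (u : R) • sJ g R}
  one_mem' := ⟨1, fun _ => symp_one⟩
  mul_mem' := fun ⟨u, hu⟩ ⟨v, hv⟩ => ⟨u * v, fun i => symp_mul (hu i) (hv i)⟩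
  inv_mem' := fun ⟨u, hu⟩ => ⟨u⁻¹, fun i => symp_inv (hu i)⟩

variable {g R} in
/-- The multiplier of a symplectic similitude (defined to be `1` off `GSp`). -/
noncomputable def multiplier (a : GL (Fin g ⊕ Fin g) R) : Rˣ :=
  letI := Classical.propDecidable
  if h : ∃ u : Rˣ,
      (a : Matrix (Fin g ⊕ Fin g) (Fin g ⊕ Fin g) R)ᵀ * sJ g R * a = (u : R) • sJ g R then
    h.choose
  else 1



lemma normal_comap_of_le_center {G : Type*} [Group G] (H K : Subgroup G)
    (hK : K ≤ Subgroup.center G) : (K.comap H.subtype).Normal := by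
  constructor
  intro x hx y
  rw [Subgroup.mem_comap] at hx ⊢
  have hc : ∀ z : G, z * H.subtype x = H.subtype x * z :=
    fun z => Subgroup.mem_center_iff.mp (hK hx) z
  have hkey : H.subtype (y * x * y⁻¹) = H.subtype x := by
    simp only [_root_.map_mul, _root_.map_inv]
    rw [hc (H.subtype y), mul_assoc, mul_inv_cancel, mul_one]
  rw [hkey]
  exact hx

lemma neg_one_mem_center :
    (-1 : GL (Fin g ⊕ Fin g) R) ∈ Subgroup.center (GL (Fin g ⊕ Fin g) R) := by
  rw [Subgroup.mem_center_iff]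
  intro y
  simp

/-- The subgroup `{±I}` of `GSp_{2g}(R)`. -/
def pmI : Subgroup ↥(GSp g R) :=
  (Subgroup.zpowers (-1 : GL (Fin g ⊕ Fin g) R)).comap (GSp g R).subtype

instance pmI_normal : (pmI g R).Normal :=
  normal_comap_of_le_center _ _ (Subgroup.zpowers_le.mpr (neg_one_mem_center g R))

/-- The subgroup `{±I}` of `Sp_{2g}(R)`. -/
def pmISp : Subgroup ↥(Sp g R) :=
  (Subgroup.zpowers (-1 : GL (Fin g ⊕ Fin g) R)).comap (Sp g R).subtype

instance pmISp_normal : (pmISp g R).Normal :=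
  normal_comap_of_le_center _ _ (Subgroup.zpowers_le.mpr (neg_one_mem_center g R))

/-- `GSp_{2g}(R)/{±I}`. -/
abbrev GSpBar := ↥(GSp g R) ⧸ pmI g R

variable {g R}

/-- A multiplier-preserving automorphism of `GSp_{2g}(R)`. -/
def IsMultAut (σ : MulAut ↥(GSp g R)) : Prop :=
  ∀ γ : ↥(GSp g R), multiplier ((σ γ : GL (Fin g ⊕ Fin g) R)) = multiplier (γ : GL (Fin g ⊕ Fin g) R)

/-- A multiplier-preserving automorphism of `GSp_{2g}(R)/{±I}`: expressed via representatives,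
`mult ∘ σ = mult` where `mult` is the descended multiplier. -/
def IsMultAutBar (σ : MulAut (GSpBar g R)) : Prop :=
  ∀ γ δ : ↥(GSp g R), σ (QuotientGroup.mk γ) = QuotientGroup.mk δ →
    multiplier (δ : GL (Fin g ⊕ Fin g) R) = multiplier (γ : GL (Fin g ⊕ Fin g) R)

/-- An inner automorphism. -/
def IsInner {G : Type*} [Group G] (σ : MulAut G) : Prop :=
  ∃ x : G, MulAut.conj x = σ

/-- `σ` is the radial map `γ ↦ mult(γ)^k • γ`. -/
def IsRadialWith (k : ℕ) (σ : MulAut ↥(GSp g R)) : Prop :=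
  ∀ γ : ↥(GSp g R),
    ((σ γ : GL (Fin g ⊕ Fin g) R) : Matrix (Fin g ⊕ Fin g) (Fin g ⊕ Fin g) R)
      = ((multiplier (γ : GL (Fin g ⊕ Fin g) R) : Rˣ) : R) ^ k •
        ((γ : GL (Fin g ⊕ Fin g) R) : Matrix (Fin g ⊕ Fin g) (Fin g ⊕ Fin g) R)

/-- A radial automorphism `χ_k` of `GSp_{2g}(F_ℓ)`. -/
def IsRadial (ℓ : ℕ) (σ : MulAut ↥(GSp g R)) : Prop :=
  ∃ k : ℕ, k < ℓ - 1 ∧ Nat.gcd (2 * k + 1) (ℓ - 1) = 1 ∧ IsRadialWith k σ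



variable (g R)

/-- The subgroup of invertible scalar matrices `R_{2g}(R)` inside `GL_{2g}(R)`. -/
def ScalarGL : Subgroup (GL (Fin g ⊕ Fin g) R) where
  carrier := {a | ∃ lam : Rˣ,
    (a : Matrix (Fin g ⊕ Fin g) (Fin g ⊕ Fin g) R) = (lam : R) • 1}
  one_mem' := ⟨1, by simp⟩
  mul_mem' := by
    rintro a b ⟨s, hs⟩ ⟨t, ht⟩
    refine ⟨s * t, ?_⟩
    have hab : ((a * b : GL (Fin g ⊕ Fin g) R) : Matrix (Fin g ⊕ Fin g) (Fin g ⊕ Fin g) R)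
        = (a : Matrix (Fin g ⊕ Fin g) (Fin g ⊕ Fin g) R) * b := rfl
    rw [hab, hs, ht, Matrix.smul_mul, Matrix.mul_smul, smul_smul, one_mul, Units.val_mul]
  inv_mem' := by
    rintro a ⟨s, hs⟩
    refine ⟨s⁻¹, ?_⟩
    have h1 : ((s⁻¹ : Rˣ) : R) • (1 : Matrix (Fin g ⊕ Fin g) (Fin g ⊕ Fin g) R) *
        (a : Matrix (Fin g ⊕ Fin g) (Fin g ⊕ Fin g) R) = 1 := by
      rw [hs, Matrix.smul_mul, Matrix.mul_smul, smul_smul, one_mul, Units.inv_mul, one_smul]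
    exact Units.inv_eq_of_mul_eq_one_left h1

lemma scalar_le_center : ScalarGL g R ≤ Subgroup.center (GL (Fin g ⊕ Fin g) R) := by
  rintro a ⟨s, hs⟩
  rw [Subgroup.mem_center_iff]
  intro y
  refine Units.ext ?_
  show (y : Matrix (Fin g ⊕ Fin g) (Fin g ⊕ Fin g) R) * a
      = (a : Matrix (Fin g ⊕ Fin g) (Fin g ⊕ Fin g) R) * y
  rw [hs, Matrix.mul_smul, Matrix.smul_mul, mul_one, one_mul]

/-- The subgroup of scalars inside `GSp_{2g}(R)`. -/
def Rsub : Subgroup ↥(GSp g R) := (ScalarGL g R).comap (GSp g R).subtype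

instance Rsub_normal : (Rsub g R).Normal :=
  normal_comap_of_le_center _ _ (scalar_le_center g R)

/-- The block diagonal matrix `diag(a·I_g, I_g)`. -/
def iotaM (a : R) : Matrix (Fin g ⊕ Fin g) (Fin g ⊕ Fin g) R :=
  Matrix.fromBlocks (a • 1) 0 0 1

/-- `ι : R^× → GL_{2g}(R)`, `a ↦ diag(a·I_g, I_g)`. -/
def iota (a : Rˣ) : GL (Fin g ⊕ Fin g) R where
  val := iotaM g R (a : R)
  inv := iotaM g R ((a⁻¹ : Rˣ) : R)
  val_inv := by
    simp [iotaM, Matrix.fromBlocks_multiply, Matrix.smul_mul, Matrix.mul_smul, smul_smul,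
      ← Units.val_mul]
  inv_val := by
    simp [iotaM, Matrix.fromBlocks_multiply, Matrix.smul_mul, Matrix.mul_smul, smul_smul,
      ← Units.val_mul]



lemma iota_mem (a : Rˣ) : iota g R a ∈ GSp g R := by
  refine ⟨a, ?_⟩
  show (iotaM g R (a : R))ᵀ * sJ g R * iotaM g R (a : R) = (a : R) • sJ g R
  simp [iotaM, sJ, Matrix.fromBlocks_transpose, Matrix.fromBlocks_multiply,
    Matrix.fromBlocks_smul, Matrix.smul_mul, Matrix.mul_smul]

lemma iota_mul (a b : Rˣ) : iota g R (a * b) = iota g R a * iota g R b := by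
  refine Units.ext ?_
  show iotaM g R ((a * b : Rˣ) : R) = iotaM g R (a : R) * iotaM g R (b : R)
  simp [iotaM, Matrix.fromBlocks_multiply, Matrix.smul_mul, Matrix.mul_smul, smul_smul,
    mul_comm]

/-- `ι` as a group homomorphism `R^× → GSp_{2g}(R)`. -/
def iotaHom : Rˣ →* ↥(GSp g R) where
  toFun a := ⟨iota g R a, iota_mem g R a⟩
  map_one' := by
    refine Subtype.ext (Units.ext ?_)
    show iotaM g R ((1 : Rˣ) : R) = (1 : Matrix (Fin g ⊕ Fin g) (Fin g ⊕ Fin g) R)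
    simp [iotaM, Matrix.fromBlocks_one]
  map_mul' a b := Subtype.ext (iota_mul g R a b)


variable {g R}

lemma sJ_smul_injective [Nontrivial R] (hg : 1 ≤ g) {u v : R}
    (h : u • sJ g R = v • sJ g R) : u = v := by
  have i0 : Fin g := ⟨0, hg⟩
  have := congrFun (congrFun h (Sum.inl i0)) (Sum.inr i0)
  simpa [sJ, Matrix.smul_apply, Matrix.one_apply_eq] using this

lemma multiplier_spec {a : GL (Fin g ⊕ Fin g) R} (ha : a ∈ GSp g R) :
    (a : Matrix (Fin g ⊕ Fin g) (Fin g ⊕ Fin g) R)ᵀ * sJ g R * a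
      = ((multiplier a : Rˣ) : R) • sJ g R := by
  have hex : ∃ u : Rˣ,
      (a : Matrix (Fin g ⊕ Fin g) (Fin g ⊕ Fin g) R)ᵀ * sJ g R * a = (u : R) • sJ g R := ha
  rw [multiplier, dif_pos hex]
  exact hex.choose_spec

lemma multiplier_eq [Nontrivial R] (hg : 1 ≤ g) {a : GL (Fin g ⊕ Fin g) R} {u : Rˣ}
    (hu : (a : Matrix (Fin g ⊕ Fin g) (Fin g ⊕ Fin g) R)ᵀ * sJ g R * a = (u : R) • sJ g R) :
    multiplier a = u := by
  have ha : a ∈ GSp g R := ⟨u, hu⟩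
  have h2 := multiplier_spec ha
  exact Units.ext (sJ_smul_injective hg (h2.symm.trans hu))
variable (g R)

/-- Scalar matrix `u • I` as an element of `GL`. -/
def scGL (u : Rˣ) : GL (Fin g ⊕ Fin g) R where
  val := (u : R) • 1
  inv := ((u⁻¹ : Rˣ) : R) • 1
  val_inv := by
    rw [Matrix.smul_mul, Matrix.mul_smul, smul_smul, one_mul, ← Units.val_mul,
      mul_inv_cancel, Units.val_one, one_smul]
  inv_val := by
    rw [Matrix.smul_mul, Matrix.mul_smul, smul_smul, one_mul, ← Units.val_mul,
      inv_mul_cancel, Units.val_one, one_smul]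

variable {g R}

lemma scGL_coe (u : Rˣ) :
    ((scGL g R u : GL (Fin g ⊕ Fin g) R) : Matrix (Fin g ⊕ Fin g) (Fin g ⊕ Fin g) R)
      = (u : R) • 1 := rfl

lemma scGL_mul (u v : Rˣ) : scGL g R (u * v) = scGL g R u * scGL g R v := by
  refine Units.ext ?_
  show ((u * v : Rˣ) : R) • (1 : Matrix (Fin g ⊕ Fin g) (Fin g ⊕ Fin g) R)
      = ((u : R) • 1) * ((v : R) • 1)
  rw [Matrix.smul_mul, Matrix.mul_smul, smul_smul, one_mul, Units.val_mul]

lemma scGL_one : scGL g R 1 = 1 := by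
  refine Units.ext ?_
  show ((1 : Rˣ) : R) • (1 : Matrix (Fin g ⊕ Fin g) (Fin g ⊕ Fin g) R) = 1
  simp

lemma scGL_comm (u : Rˣ) (a : GL (Fin g ⊕ Fin g) R) :
    scGL g R u * a = a * scGL g R u := by
  refine Units.ext ?_
  show ((u : R) • (1 : Matrix (Fin g ⊕ Fin g) (Fin g ⊕ Fin g) R)) * a
      = (a : Matrix (Fin g ⊕ Fin g) (Fin g ⊕ Fin g) R) * ((u : R) • 1)
  rw [Matrix.smul_mul, Matrix.mul_smul, one_mul, mul_one]

lemma scGL_symp (u : Rˣ) :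
    ((scGL g R u : GL (Fin g ⊕ Fin g) R) : Matrix (Fin g ⊕ Fin g) (Fin g ⊕ Fin g) R)ᵀ *
      sJ g R * (scGL g R u : GL (Fin g ⊕ Fin g) R)
      = ((u ^ 2 : Rˣ) : R) • sJ g R := by
  rw [scGL_coe, Matrix.transpose_smul, Matrix.transpose_one, Matrix.smul_mul, Matrix.smul_mul,
    Matrix.mul_smul, one_mul, Matrix.mul_one, smul_smul]
  norm_num [pow_two]

lemma scGL_mem (u : Rˣ) : scGL g R u ∈ GSp g R := ⟨u ^ 2, scGL_symp u⟩

lemma smul_coe_symp {a : GL (Fin g ⊕ Fin g) R} {u c : Rˣ}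
    (ha : (a : Matrix (Fin g ⊕ Fin g) (Fin g ⊕ Fin g) R)ᵀ * sJ g R * a = (u : R) • sJ g R) :
    ((scGL g R c * a : GL (Fin g ⊕ Fin g) R) :
        Matrix (Fin g ⊕ Fin g) (Fin g ⊕ Fin g) R)ᵀ * sJ g R * (scGL g R c * a)
      = ((c ^ 2 * u : Rˣ) : R) • sJ g R := symp_mul (scGL_symp c) ha

/-- multiplier is multiplicative on GSp -/
lemma multiplier_mul [Nontrivial R] (hg : 1 ≤ g) {a b : GL (Fin g ⊕ Fin g) R}
    (ha : a ∈ GSp g R) (hb : b ∈ GSp g R) :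
    multiplier (a * b) = multiplier a * multiplier b :=
  multiplier_eq hg (symp_mul (multiplier_spec ha) (multiplier_spec hb))

lemma multiplier_scGL [Nontrivial R] (hg : 1 ≤ g) (u : Rˣ) :
    multiplier (scGL g R u) = u ^ 2 := multiplier_eq hg (scGL_symp u)
variable (g R)

/-- The radial map `γ ↦ mult(γ)^k • γ` on `GSp`. -/
noncomputable def radialFun (k : ℕ) (γ : ↥(GSp g R)) : ↥(GSp g R) :=
  ⟨scGL g R ((multiplier (γ : GL (Fin g ⊕ Fin g) R)) ^ k) * γ,
    (GSp g R).mul_mem (scGL_mem _) γ.2⟩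

variable {g R}

lemma radialFun_coe (k : ℕ) (γ : ↥(GSp g R)) :
    ((radialFun g R k γ : GL (Fin g ⊕ Fin g) R) : Matrix (Fin g ⊕ Fin g) (Fin g ⊕ Fin g) R)
      = ((multiplier (γ : GL (Fin g ⊕ Fin g) R) : Rˣ) : R) ^ k •
        ((γ : GL (Fin g ⊕ Fin g) R) : Matrix (Fin g ⊕ Fin g) (Fin g ⊕ Fin g) R) := by
  show (((multiplier (γ : GL (Fin g ⊕ Fin g) R)) ^ k : Rˣ) : R) •
      (1 : Matrix (Fin g ⊕ Fin g) (Fin g ⊕ Fin g) R) *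
      ((γ : GL (Fin g ⊕ Fin g) R) : Matrix (Fin g ⊕ Fin g) (Fin g ⊕ Fin g) R) = _
  rw [Matrix.smul_mul, Matrix.one_mul, Units.val_pow_eq_pow_val]

lemma multiplier_radialFun [Nontrivial R] (hg : 1 ≤ g) (k : ℕ) (γ : ↥(GSp g R)) :
    multiplier ((radialFun g R k γ : GL (Fin g ⊕ Fin g) R))
      = (multiplier (γ : GL (Fin g ⊕ Fin g) R)) ^ (2 * k + 1) := by
  show multiplier (scGL g R ((multiplier (γ : GL (Fin g ⊕ Fin g) R)) ^ k) *
      (γ : GL (Fin g ⊕ Fin g) R)) = _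
  rw [multiplier_mul hg (scGL_mem _) γ.2, multiplier_scGL hg, ← pow_mul, mul_comm k 2,
    ← pow_succ]

lemma radialFun_mul [Nontrivial R] (hg : 1 ≤ g) (k : ℕ) (γ δ : ↥(GSp g R)) :
    radialFun g R k (γ * δ) = radialFun g R k γ * radialFun g R k δ := by
  refine Subtype.ext ?_
  show scGL g R ((multiplier ((γ * δ : ↥(GSp g R)) : GL (Fin g ⊕ Fin g) R)) ^ k) *
      ((γ : GL (Fin g ⊕ Fin g) R) * (δ : GL (Fin g ⊕ Fin g) R))
      = (scGL g R ((multiplier (γ : GL (Fin g ⊕ Fin g) R)) ^ k) * γ) *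
        (scGL g R ((multiplier (δ : GL (Fin g ⊕ Fin g) R)) ^ k) * δ)
  have hmm : multiplier ((γ * δ : ↥(GSp g R)) : GL (Fin g ⊕ Fin g) R)
      = multiplier (γ : GL (Fin g ⊕ Fin g) R) * multiplier (δ : GL (Fin g ⊕ Fin g) R) :=
    multiplier_mul hg γ.2 δ.2
  rw [hmm, mul_pow, scGL_mul, mul_assoc,
    ← mul_assoc (scGL g R ((multiplier (δ : GL (Fin g ⊕ Fin g) R)) ^ k)),
    scGL_comm ((multiplier (δ : GL (Fin g ⊕ Fin g) R)) ^ k) (γ : GL (Fin g ⊕ Fin g) R)]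
  simp only [mul_assoc]

lemma radialFun_comp [Nontrivial R] (hg : 1 ≤ g) (j k : ℕ) (γ : ↥(GSp g R)) :
    radialFun g R j (radialFun g R k γ)
      = ⟨scGL g R ((multiplier (γ : GL (Fin g ⊕ Fin g) R)) ^ ((2 * k + 1) * j + k)) * γ,
          (GSp g R).mul_mem (scGL_mem _) γ.2⟩ := by
  refine Subtype.ext ?_
  show scGL g R ((multiplier ((radialFun g R k γ : ↥(GSp g R)) : GL (Fin g ⊕ Fin g) R)) ^ j) *
      (scGL g R ((multiplier (γ : GL (Fin g ⊕ Fin g) R)) ^ k) * (γ : GL (Fin g ⊕ Fin g) R))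
      = scGL g R ((multiplier (γ : GL (Fin g ⊕ Fin g) R)) ^ ((2 * k + 1) * j + k)) * γ
  rw [multiplier_radialFun hg, ← mul_assoc, ← scGL_mul, ← pow_mul, ← pow_add]
lemma exists_j {M k : ℕ} (hM : 0 < M) (hk : Nat.gcd (2 * k + 1) M = 1) :
    ∃ j : ℕ, M ∣ (2 * k + 1) * j + k := by
  haveI : NeZero M := ⟨by omega⟩
  have hcop : Nat.Coprime (2 * k + 1) M := hk
  let u : (ZMod M)ˣ := ZMod.unitOfCoprime (2 * k + 1) hcop
  let y : ZMod M := ((u⁻¹ : (ZMod M)ˣ) : ZMod M) * (-(k : ZMod M))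
  refine ⟨y.val, ?_⟩
  rw [← ZMod.natCast_eq_zero_iff]
  push_cast
  have hval : ((y.val : ℕ) : ZMod M) = y := by
    rw [ZMod.natCast_val, ZMod.cast_id]
  rw [hval]
  have hu : ((u : (ZMod M)ˣ) : ZMod M) = (2 * (k : ZMod M) + 1) := by
    rw [ZMod.coe_unitOfCoprime]
    push_cast
    ring
  calc (2 * (k : ZMod M) + 1) * y + k
      = ((u : (ZMod M)ˣ) : ZMod M) * (((u⁻¹ : (ZMod M)ˣ) : ZMod M) * (-(k : ZMod M))) + k := by
        rw [hu]
    _ = 0 := by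
        rw [← mul_assoc, ← Units.val_mul, mul_inv_cancel, Units.val_one, one_mul]
        ring

variable {g : ℕ} {ℓ : ℕ} [Fact ℓ.Prime]

lemma units_pow_of_dvd {e : ℕ} (he : (ℓ - 1) ∣ e) (c : (ZMod ℓ)ˣ) : c ^ e = 1 := by
  obtain ⟨t, rfl⟩ := he
  rw [pow_mul, ZMod.units_pow_card_sub_one_eq_one, one_pow]

lemma radialFun_inverse (hg : 1 ≤ g) {j k : ℕ} (hjk : (ℓ - 1) ∣ (2 * k + 1) * j + k)
    (γ : ↥(GSp g (ZMod ℓ))) :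
    radialFun g (ZMod ℓ) j (radialFun g (ZMod ℓ) k γ) = γ := by
  rw [radialFun_comp hg]
  refine Subtype.ext ?_
  show scGL g (ZMod ℓ)
      ((multiplier (γ : GL (Fin g ⊕ Fin g) (ZMod ℓ))) ^ ((2 * k + 1) * j + k)) *
      (γ : GL (Fin g ⊕ Fin g) (ZMod ℓ)) = (γ : GL (Fin g ⊕ Fin g) (ZMod ℓ))
  rw [units_pow_of_dvd hjk, scGL_one, one_mul]

/-- The radial automorphism `χ_k`, given an inverse exponent `j`. -/
noncomputable def chi (g : ℕ) (hg : 1 ≤ g) (k j : ℕ)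
    (hjk : (ℓ - 1) ∣ (2 * k + 1) * j + k) : MulAut ↥(GSp g (ZMod ℓ)) where
  toFun := radialFun g (ZMod ℓ) k
  invFun := radialFun g (ZMod ℓ) j
  left_inv := radialFun_inverse hg hjk
  right_inv := by
    intro γ
    have hjk' : (ℓ - 1) ∣ (2 * j + 1) * k + j := by
      have : (2 * j + 1) * k + j = (2 * k + 1) * j + k := by ring
      rw [this]; exact hjk
    exact radialFun_inverse hg hjk' γ
  map_mul' := radialFun_mul hg k

lemma chi_isRadialWith (hg : 1 ≤ g) (k j : ℕ) (hjk : (ℓ - 1) ∣ (2 * k + 1) * j + k) :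
    IsRadialWith k (chi g hg k j hjk) := fun γ => radialFun_coe k γ

lemma gsp_ext {γ δ : ↥(GSp g (ZMod ℓ))}
    (h : ((γ : GL (Fin g ⊕ Fin g) (ZMod ℓ)) : Matrix (Fin g ⊕ Fin g) (Fin g ⊕ Fin g) (ZMod ℓ))
      = ((δ : GL (Fin g ⊕ Fin g) (ZMod ℓ)) : Matrix (Fin g ⊕ Fin g) (Fin g ⊕ Fin g) (ZMod ℓ))) :
    γ = δ := Subtype.ext (Units.ext h)

lemma multiplier_iota' {R : Type*} [CommRing R] [Nontrivial R] (hg : 1 ≤ g) (a : Rˣ) :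
    multiplier (iota g R a) = a := by
  refine multiplier_eq hg ?_
  show (iotaM g R (a : R))ᵀ * sJ g R * iotaM g R (a : R) = (a : R) • sJ g R
  simp [iotaM, sJ, Matrix.fromBlocks_transpose, Matrix.fromBlocks_multiply,
    Matrix.fromBlocks_smul, Matrix.smul_mul, Matrix.mul_smul]

lemma radialWith_unique (hg : 1 ≤ g) {k₁ k₂ : ℕ} {σ : MulAut ↥(GSp g (ZMod ℓ))}
    (h1 : k₁ < ℓ - 1) (h2 : k₂ < ℓ - 1)
    (r1 : IsRadialWith k₁ σ) (r2 : IsRadialWith k₂ σ) : k₁ = k₂ := by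
  have hp : ℓ.Prime := Fact.out
  obtain ⟨u, hu⟩ := IsCyclic.exists_generator (α := (ZMod ℓ)ˣ)
  have hord : orderOf u = ℓ - 1 := by
    rw [orderOf_eq_card_of_forall_mem_zpowers hu, Nat.card_eq_fintype_card,
      ZMod.card_units_eq_totient, Nat.totient_prime hp]
  set γ : ↥(GSp g (ZMod ℓ)) := ⟨iota g (ZMod ℓ) u, iota_mem g (ZMod ℓ) u⟩ with hγ
  have hmult : multiplier (γ : GL (Fin g ⊕ Fin g) (ZMod ℓ)) = u := multiplier_iota' hg u
  have heq := (r1 γ).symm.trans (r2 γ)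
  rw [hmult] at heq
  -- evaluate at entry (inl i0, inl i0)
  have i0 : Fin g := ⟨0, hg⟩
  have hent := congrFun (congrFun heq (Sum.inl i0)) (Sum.inl i0)
  have hγM : ((γ : GL (Fin g ⊕ Fin g) (ZMod ℓ)) :
      Matrix (Fin g ⊕ Fin g) (Fin g ⊕ Fin g) (ZMod ℓ)) (Sum.inl i0) (Sum.inl i0)
      = (u : ZMod ℓ) := by
    show iotaM g (ZMod ℓ) (u : ZMod ℓ) (Sum.inl i0) (Sum.inl i0) = (u : ZMod ℓ)
    simp [iotaM, Matrix.one_apply_eq]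
  rw [Matrix.smul_apply, Matrix.smul_apply, hγM, smul_eq_mul, smul_eq_mul] at hent
  have hcancel : ((u : ZMod ℓ)) ^ k₁ = ((u : ZMod ℓ)) ^ k₂ :=
    mul_right_cancel₀ (Units.ne_zero u) hent
  have hunits : u ^ k₁ = u ^ k₂ := by
    ext
    rw [Units.val_pow_eq_pow_val, Units.val_pow_eq_pow_val]
    exact hcancel
  have hmod := pow_eq_pow_iff_modEq.mp hunits
  rw [hord] at hmod
  have := Nat.ModEq.eq_of_lt_of_lt hmod h1 h2
  exact this
lemma count_lemma {m : ℕ} (hm : 2 ∣ m) (hm0 : 0 < m) :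
    ((Finset.range m).filter fun k => Nat.gcd (2 * k + 1) m = 1).card
      = 2 * Nat.totient m := by
  rw [← Nat.totient_mul_of_prime_of_dvd Nat.prime_two hm]
  rw [Nat.totient]
  refine Finset.card_bij' (fun k _ => 2 * k + 1) (fun n _ => n / 2) ?_ ?_ ?_ ?_
  · intro k hk
    simp only [Finset.mem_filter, Finset.mem_range] at hk ⊢
    obtain ⟨hk1, hk2⟩ := hk
    refine ⟨by omega, ?_⟩
    have hodd : Nat.Coprime 2 (2 * k + 1) := by
      rw [Nat.coprime_two_left]; exact ⟨k, by ring⟩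
    exact Nat.coprime_mul_iff_left.mpr ⟨hodd, Nat.coprime_comm.mp hk2⟩
  · intro n hn
    simp only [Finset.mem_filter, Finset.mem_range] at hn ⊢
    obtain ⟨hn1, hn2⟩ := hn
    have hodd : n % 2 = 1 := by
      rcases Nat.even_or_odd n with he | ho
      · exfalso
        have h2 : (2 : ℕ) ∣ Nat.gcd (2 * m) n := Nat.dvd_gcd ⟨m, rfl⟩ he.two_dvd
        rw [hn2] at h2; omega
      · exact Nat.odd_iff.mp ho
    refine ⟨by omega, ?_⟩
    have : 2 * (n / 2) + 1 = n := by omega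
    rw [this]
    exact Nat.coprime_comm.mp (Nat.coprime_mul_iff_left.mp hn2).2
  · intro k _; omega
  · intro n hn
    simp only [Finset.mem_filter, Finset.mem_range] at hn
    have hodd : n % 2 = 1 := by
      rcases Nat.even_or_odd n with he | ho
      · exfalso
        have h2 : (2 : ℕ) ∣ Nat.gcd (2 * m) n := Nat.dvd_gcd ⟨m, rfl⟩ he.two_dvd
        rw [hn.2] at h2; omega
      · exact Nat.odd_iff.mp ho
    omega

/-- the group of radial automorphisms has order `2φ(ℓ-1)`. -/
theorem statement14 (g ℓ : ℕ) (hg : 1 ≤ g) (hℓ : Nat.Prime ℓ) (hℓ5 : 5 ≤ ℓ) :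
    Nat.card {σ : MulAut ↥(GSp g (ZMod ℓ)) | IsRadial ℓ σ} = 2 * Nat.totient (ℓ - 1) ∧
    ((Finset.range (ℓ - 1)).filter fun k => Nat.gcd (2 * k + 1) (ℓ - 1) = 1).card
      = 2 * Nat.totient (ℓ - 1) ∧
    (∀ (k₁ k₂ : ℕ) (σ : MulAut ↥(GSp g (ZMod ℓ))), k₁ < ℓ - 1 → k₂ < ℓ - 1 →
      IsRadialWith k₁ σ → IsRadialWith k₂ σ → k₁ = k₂) := by
  haveI : Fact ℓ.Prime := ⟨hℓ⟩
  have hdvd : 2 ∣ ℓ - 1 := by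
    have hodd : Odd ℓ := hℓ.odd_of_ne_two (by omega)
    obtain ⟨t, ht⟩ := hodd; omega
  have hM0 : 0 < ℓ - 1 := by omega
  have hcount := count_lemma hdvd hM0
  have part3 : ∀ (k₁ k₂ : ℕ) (σ : MulAut ↥(GSp g (ZMod ℓ))), k₁ < ℓ - 1 → k₂ < ℓ - 1 →
      IsRadialWith k₁ σ → IsRadialWith k₂ σ → k₁ = k₂ :=
    fun _ _ _ h1 h2 r1 r2 => radialWith_unique hg h1 h2 r1 r2
  refine ⟨?_, hcount, part3⟩
  set s := (Finset.range (ℓ - 1)).filter fun k => Nat.gcd (2 * k + 1) (ℓ - 1) = 1 with hs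
  have hex : ∀ k : {k // k ∈ s}, ∃ j, (ℓ - 1) ∣ (2 * (k : ℕ) + 1) * j + (k : ℕ) := fun k =>
    exists_j hM0 (Finset.mem_filter.mp k.2).2
  let F : {k // k ∈ s} → {σ : MulAut ↥(GSp g (ZMod ℓ)) | IsRadial ℓ σ} := fun k =>
    ⟨chi g hg (k : ℕ) (hex k).choose (hex k).choose_spec,
      ⟨(k : ℕ), Finset.mem_range.mp (Finset.mem_filter.mp k.2).1,
        (Finset.mem_filter.mp k.2).2,
        chi_isRadialWith hg (k : ℕ) (hex k).choose (hex k).choose_spec⟩⟩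
  have hF : Function.Bijective F := by
    constructor
    · rintro ⟨k₁, hk₁⟩ ⟨k₂, hk₂⟩ hFk
      have hchi : chi g hg k₁ (hex ⟨k₁, hk₁⟩).choose (hex ⟨k₁, hk₁⟩).choose_spec
          = chi g hg k₂ (hex ⟨k₂, hk₂⟩).choose (hex ⟨k₂, hk₂⟩).choose_spec :=
        Subtype.ext_iff.mp hFk
      have h1 := chi_isRadialWith hg k₁ (hex ⟨k₁, hk₁⟩).choose (hex ⟨k₁, hk₁⟩).choose_spec
      have h2 : IsRadialWith k₂
          (chi g hg k₁ (hex ⟨k₁, hk₁⟩).choose (hex ⟨k₁, hk₁⟩).choose_spec) := by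
        rw [hchi]
        exact chi_isRadialWith hg k₂ (hex ⟨k₂, hk₂⟩).choose (hex ⟨k₂, hk₂⟩).choose_spec
      exact Subtype.ext (radialWith_unique hg
        (Finset.mem_range.mp (Finset.mem_filter.mp hk₁).1)
        (Finset.mem_range.mp (Finset.mem_filter.mp hk₂).1) h1 h2)
    · rintro ⟨σ, hσ⟩
      obtain ⟨k, hk1, hk2, hkr⟩ := hσ
      have hkmem : k ∈ s := Finset.mem_filter.mpr ⟨Finset.mem_range.mpr hk1, hk2⟩
      refine ⟨⟨k, hkmem⟩, ?_⟩
      refine Subtype.ext ?_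
      refine MulEquiv.ext fun γ => ?_
      exact gsp_ext ((chi_isRadialWith hg k (hex ⟨k, hkmem⟩).choose
        (hex ⟨k, hkmem⟩).choose_spec γ).trans (hkr γ).symm)
  calc Nat.card {σ : MulAut ↥(GSp g (ZMod ℓ)) | IsRadial ℓ σ}
      = Nat.card {k // k ∈ s} := (Nat.card_congr (Equiv.ofBijective F hF)).symm
    _ = s.card := Nat.card_eq_finsetCard s
    _ = 2 * Nat.totient (ℓ - 1) := hcount

end Paper
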